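/- arXiv:2212.12921 — 4 statements merged into one kernel-verified Lean document; each statement's English description precedes it below -/
import Mathlib

section
/- The Fenchel conjugate of gs_k equals the k-weighted-group hard-thresholding function: gs_k*(θ̃) = (1/2)·Σ_{j=1}^k (1/d_{⟨j⟩})·‖θ̃_{⟨s_j⟩}‖₂², where ⟨s_1⟩,…,⟨s_m⟩ is an ordering of the groups such that the values (1/d_j)·‖θ̃_{s_j}‖₂² are in nonincreasing order, i.e., the conjugate is half the sum of the k largest values of (1/d_j)·‖θ̃_{s_j}‖₂² over j ∈ {1,…,m}. -/
open Finset

noncomputable section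
open scoped Classical BigOperators

/-- Keep only the entries of `θ` in the index set `s`, zero out the rest. -/
def groupProj {n : ℕ} (s : Finset (Fin n)) (θ : Fin n → ℝ) : Fin n → ℝ :=
  fun i => if i ∈ s then θ i else 0

/-- Number of groups of `θ` (w.r.t. the groups `s`) that are nonzero. -/
def nnzGroups {n m : ℕ} (s : Fin m → Finset (Fin n)) (θ : Fin n → ℝ) : ℕ :=
  (Finset.univ.filter fun j => groupProj (s j) θ ≠ 0).card

/-- The indicator-augmented weighted group sparse function `gs_k`. -/
def gsk {n m : ℕ} (s : Fin m → Finset (Fin n)) (d : Fin m → ℝ) (k : ℕ)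
    (θ : Fin n → ℝ) : EReal :=
  if nnzGroups s θ ≤ k then
    (((1 : ℝ) / 2) * ∑ j, d j * ∑ i ∈ s j, (θ i) ^ 2 : ℝ) else ⊤

/-- Fenchel conjugate of an extended-real-valued function on `ℝⁿ`. -/
def fconj {n : ℕ} (f : (Fin n → ℝ) → EReal) (y : Fin n → ℝ) : EReal :=
  ⨆ θ : Fin n → ℝ, ((∑ i, y i * θ i : ℝ) : EReal) - f θ

/-- Perspective of the squared Euclidean norm. -/
def phi {n : ℕ} (v : Fin n → ℝ) (t : ℝ) : EReal :=
  if 0 < t then ((∑ i, (v i) ^ 2) / t : ℝ)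
  else if v = 0 ∧ t = 0 then (0 : EReal) else ⊤

/-- `ℓ₀` "norm": number of nonzero coordinates. -/
def l0norm {n : ℕ} (t : Fin n → ℝ) : ℕ :=
  (Finset.univ.filter fun i => t i ≠ 0).card

/-- The (unstructured) sparse function `s_k`. -/
def sparseFun {m : ℕ} (k : ℕ) (x : Fin m → ℝ) : EReal :=
  if l0norm x ≤ k then (((1 : ℝ) / 2) * ∑ i, (x i) ^ 2 : ℝ) else ⊤

/-- The constraint set `B_k`. -/
def Bk (m k : ℕ) : Set (Fin m → ℝ) :=
  {u | (∀ j, 0 ≤ u j ∧ u j ≤ 1) ∧ (∑ j, u j) ≤ (k : ℝ)}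

/-! Both `⟨y, θ⟩` and `gs_k θ` split over the groups, and on group `j` the concave quadratic
`⟨y_{s_j}, θ_{s_j}⟩ - (d_j / 2) ‖θ_{s_j}‖²` is at most `‖y_{s_j}‖² / (2 d_j)`, with equality at
`θ_{s_j} = y_{s_j} / d_j`. Groups on which `θ` vanishes contribute `0`, so for `θ` with at most `k`
nonzero groups the objective is at most half a sum of `k` of the scores `‖y_{s_j}‖² / d_j`, hence at
most half the sum of the `k` largest ones; `θ = y / d_j` on the `k` top groups and `0` elsewhere
attains this bound. -/

theorem Finset.val_le_orderEmbOfFin {m : ℕ} (S : Finset (Fin m)) (i : Fin #S) :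
    (i : ℕ) ≤ S.orderEmbOfFin rfl i := by
  set e := S.orderEmbOfFin rfl
  calc (i : ℕ) = #(Iio i) := (Fin.card_Iio i).symm
    _ ≤ #(Iio (e i)) :=
      card_le_card_of_injOn e (fun a ha => by simpa using e.strictMono (by simpa using ha))
        e.injective.injOn
    _ = e i := Fin.card_Iio _

theorem Fin.sum_le_sum_filter_val_lt_of_antitone {M : Type*} [AddCommMonoid M] [PartialOrder M]
    [IsOrderedAddMonoid M] {m k : ℕ} {c : Fin m → M} (hc : Antitone c) (hc0 : ∀ j, 0 ≤ c j)
    {S : Finset (Fin m)} (hS : #S ≤ k) :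
    ∑ j ∈ S, c j ≤ ∑ j ∈ univ.filter (fun j : Fin m => (j : ℕ) < k), c j := by
  have hSm : #S ≤ m := by simpa using S.card_le_univ
  calc ∑ j ∈ S, c j = ∑ i : Fin #S, c (S.orderEmbOfFin rfl i) := by
        rw [← S.sum_coe_sort, ← (S.orderIsoOfFin rfl).toEquiv.sum_comp]
        rfl
    _ ≤ ∑ i : Fin #S, c (Fin.castLE hSm i) :=
        sum_le_sum fun i _ => hc (Fin.le_def.2 (S.val_le_orderEmbOfFin i))
    _ = ∑ j ∈ univ.map (Fin.castLEEmb hSm), c j := by rw [sum_map]; rfl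
    _ ≤ _ := sum_le_sum_of_subset_of_nonneg
        (fun j hj => by
          obtain ⟨i, -, rfl⟩ := mem_map.1 hj
          simpa using i.2.trans_le hS)
        fun j _ _ => hc0 j

section Partition

variable {ι κ : Type*} {s : κ → Finset ι}

theorem sum_eq_sum_sum_of_partition [Fintype ι] [Fintype κ] {M : Type*} [AddCommMonoid M]
    (hdisj : ∀ j j', j ≠ j' → Disjoint (s j) (s j')) (hcover : ∀ i, ∃ j, i ∈ s j)
    (f : ι → M) : ∑ i, f i = ∑ j, ∑ i ∈ s j, f i := by
  have hU : univ.biUnion s = univ := eq_univ_of_forall fun i => by simpa using hcover i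
  rw [← sum_biUnion fun j _ j' _ hne => hdisj j j' hne, hU]

theorem exists_eqOn_of_partition {α : Type*}
    (hdisj : ∀ j j', j ≠ j' → Disjoint (s j) (s j')) (hcover : ∀ i, ∃ j, i ∈ s j)
    (v : κ → ι → α) : ∃ θ : ι → α, ∀ j, ∀ i ∈ s j, θ i = v j i := by
  choose g hg using hcover
  refine ⟨fun i => v (g i) i, fun j i hi => ?_⟩
  obtain rfl : g i = j := by
    by_contra hne
    exact disjoint_left.1 (hdisj _ _ hne) (hg i) hi
  rfl

end Partition

section GroupObjective

variable {ι : Type*} (s : Finset ι) (d : ℝ) (y θ : ι → ℝ)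

def groupObjective : ℝ :=
  ∑ i ∈ s, y i * θ i - d / 2 * ∑ i ∈ s, θ i ^ 2

theorem groupObjective_eq_sum :
    groupObjective s d y θ = ∑ i ∈ s, (y i * θ i - d / 2 * θ i ^ 2) := by
  rw [groupObjective, mul_sum, sum_sub_distrib]

variable {s d y θ}

theorem groupObjective_le (hd : 0 < d) :
    groupObjective s d y θ ≤ 1 / 2 * (1 / d * ∑ i ∈ s, y i ^ 2) := by
  rw [groupObjective_eq_sum, mul_sum, mul_sum]
  refine sum_le_sum fun i _ => ?_
  have hsq : 1 / 2 * (1 / d * y i ^ 2) - (y i * θ i - d / 2 * θ i ^ 2)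
      = (y i - d * θ i) ^ 2 / (2 * d) := by
    field_simp
    ring
  have : 0 ≤ (y i - d * θ i) ^ 2 / (2 * d) := by positivity
  linarith

theorem groupObjective_of_eqOn_div (hd : d ≠ 0) (hθ : ∀ i ∈ s, θ i = y i / d) :
    groupObjective s d y θ = 1 / 2 * (1 / d * ∑ i ∈ s, y i ^ 2) := by
  rw [groupObjective_eq_sum, mul_sum, mul_sum]
  refine sum_congr rfl fun i hi => ?_
  rw [hθ i hi]
  field_simp
  ring

theorem groupObjective_of_eqOn_zero (hθ : ∀ i ∈ s, θ i = 0) : groupObjective s d y θ = 0 := by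
  rw [groupObjective_eq_sum]
  exact sum_eq_zero fun i hi => by simp [hθ i hi]

end GroupObjective

section GroupSparse

variable {n m : ℕ} {s : Fin m → Finset (Fin n)} {d : Fin m → ℝ} {k : ℕ} {y θ : Fin n → ℝ}

theorem groupProj_eq_zero_iff {t : Finset (Fin n)} : groupProj t θ = 0 ↔ ∀ i ∈ t, θ i = 0 := by
  simp [funext_iff, groupProj]

theorem nnzGroups_le_card (K : Finset (Fin m)) (hθ : ∀ j ∉ K, ∀ i ∈ s j, θ i = 0) :
    nnzGroups s θ ≤ #K :=
  card_le_card fun j hj => by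
    by_contra hjK
    simp only [mem_filter, mem_univ, true_and] at hj
    exact hj (groupProj_eq_zero_iff.2 (hθ j hjK))

theorem inner_sub_gsk_of_nnzGroups_le (hdisj : ∀ j j', j ≠ j' → Disjoint (s j) (s j'))
    (hcover : ∀ i, ∃ j, i ∈ s j) (h : nnzGroups s θ ≤ k) :
    ((∑ i, y i * θ i : ℝ) : EReal) - gsk s d k θ
      = ((∑ j, groupObjective (s j) (d j) y θ : ℝ) : EReal) := by
  rw [gsk, if_pos h, ← EReal.coe_sub, sum_eq_sum_sum_of_partition hdisj hcover, mul_sum,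
    ← sum_sub_distrib]
  congr 2 with j
  rw [groupObjective]
  ring

theorem inner_sub_gsk_of_lt (h : k < nnzGroups s θ) :
    ((∑ i, y i * θ i : ℝ) : EReal) - gsk s d k θ = ⊥ := by
  rw [gsk, if_neg h.not_ge, sub_eq_add_neg, EReal.neg_top, EReal.add_bot]

theorem sum_groupObjective_le (hd : ∀ j, 0 < d j) {σ : Equiv.Perm (Fin m)}
    (hσ : Antitone fun j => (1 / d (σ j)) * ∑ i ∈ s (σ j), (y i) ^ 2) (h : nnzGroups s θ ≤ k) :
    ∑ j, groupObjective (s j) (d j) y θ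
      ≤ 1 / 2 * ∑ j ∈ univ.filter (fun j : Fin m => (j : ℕ) < k),
          (1 / d (σ j)) * ∑ i ∈ s (σ j), (y i) ^ 2 := by
  set T := univ.filter fun j => groupProj (s j) θ ≠ 0
  have hT : ∀ j ∉ T, groupObjective (s j) (d j) y θ = 0 := fun j hj =>
    groupObjective_of_eqOn_zero (groupProj_eq_zero_iff.1 (by simpa [T] using hj))
  calc ∑ j, groupObjective (s j) (d j) y θ = ∑ j ∈ T, groupObjective (s j) (d j) y θ :=
        (sum_subset (subset_univ T) fun j _ hj => hT j hj).symm
    _ ≤ ∑ j ∈ T, 1 / 2 * (1 / d j * ∑ i ∈ s j, y i ^ 2) :=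
        sum_le_sum fun j _ => groupObjective_le (hd j)
    _ = 1 / 2 * ∑ j ∈ T.map σ.symm.toEmbedding, 1 / d (σ j) * ∑ i ∈ s (σ j), y i ^ 2 := by
        simp [sum_map, mul_sum]
    _ ≤ _ := by
        refine mul_le_mul_of_nonneg_left ?_ (by norm_num)
        refine Fin.sum_le_sum_filter_val_lt_of_antitone hσ (fun j => ?_) ((card_map _).trans_le h)
        have := hd (σ j)
        positivity

theorem exists_sum_groupObjective_eq (hdisj : ∀ j j', j ≠ j' → Disjoint (s j) (s j'))
    (hcover : ∀ i, ∃ j, i ∈ s j) (hd : ∀ j, d j ≠ 0) (σ : Equiv.Perm (Fin m)) :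
    ∃ θ, nnzGroups s θ ≤ k ∧ ∑ j, groupObjective (s j) (d j) y θ
      = 1 / 2 * ∑ j ∈ univ.filter (fun j : Fin m => (j : ℕ) < k),
          (1 / d (σ j)) * ∑ i ∈ s (σ j), (y i) ^ 2 := by
  set K := (univ.filter fun j : Fin m => (j : ℕ) < k).map σ.toEmbedding
  obtain ⟨θ, hθ⟩ := exists_eqOn_of_partition hdisj hcover
    fun j i => if j ∈ K then y i / d j else 0
  refine ⟨θ, ?_, ?_⟩
  · calc nnzGroups s θ ≤ #K := nnzGroups_le_card K fun j hj i hi => by simp [hθ j i hi, hj]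
      _ ≤ k := by simp [K, Fin.card_filter_val_lt]
  · calc ∑ j, groupObjective (s j) (d j) y θ
        = ∑ j, if j ∈ K then 1 / 2 * (1 / d j * ∑ i ∈ s j, y i ^ 2) else 0 := by
          refine sum_congr rfl fun j _ => ?_
          split_ifs with hj
          · exact groupObjective_of_eqOn_div (hd j) fun i hi => by simp [hθ j i hi, hj]
          · exact groupObjective_of_eqOn_zero fun i hi => by simp [hθ j i hi, hj]
      _ = _ := by rw [sum_ite_mem, univ_inter, sum_map, mul_sum]; rfl

end GroupSparse

theorem gsk_conj_general {n m : ℕ} (k : ℕ)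
    (s : Fin m → Finset (Fin n))
    (hdisj : ∀ j j', j ≠ j' → Disjoint (s j) (s j'))
    (hcover : ∀ i, ∃ j, i ∈ s j)
    (d : Fin m → ℝ) (hd : ∀ j, 0 < d j)
    (y : Fin n → ℝ) (σ : Equiv.Perm (Fin m))
    (hσ : Antitone fun j => (1 / d (σ j)) * ∑ i ∈ s (σ j), (y i) ^ 2) :
    fconj (gsk s d k) y
      = ((((1 : ℝ) / 2) * ∑ j ∈ Finset.univ.filter (fun j : Fin m => (j : ℕ) < k),
          (1 / d (σ j)) * ∑ i ∈ s (σ j), (y i) ^ 2 : ℝ) : EReal) := by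
  apply le_antisymm
  · refine iSup_le fun θ => ?_
    rcases le_or_gt (nnzGroups s θ) k with h | h
    · rw [inner_sub_gsk_of_nnzGroups_le hdisj hcover h]
      exact EReal.coe_le_coe (sum_groupObjective_le hd hσ h)
    · rw [inner_sub_gsk_of_lt h]
      exact bot_le
  · obtain ⟨θ, hθ, hval⟩ := exists_sum_groupObjective_eq (k := k) (y := y) hdisj hcover
      (fun j => (hd j).ne') σ
    refine le_iSup_of_le θ (le_of_eq ?_)
    rw [inner_sub_gsk_of_nnzGroups_le hdisj hcover hθ, hval]

/-- the Fenchel conjugate of `gs_k` is half the sum of the `k`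
largest values of `(1/d_j)·‖θ̃_{s_j}‖₂²`. -/
theorem gsk_conj {n m : ℕ} (k : ℕ) (hk1 : 1 ≤ k) (hkm : k ≤ m)
    (s : Fin m → Finset (Fin n))
    (hdisj : ∀ j j', j ≠ j' → Disjoint (s j) (s j'))
    (hcover : ∀ i, ∃ j, i ∈ s j)
    (d : Fin m → ℝ) (hd : ∀ j, 0 < d j)
    (y : Fin n → ℝ) (σ : Equiv.Perm (Fin m))
    (hσ : Antitone fun j => (1 / d (σ j)) * ∑ i ∈ s (σ j), (y i) ^ 2) :
    fconj (gsk s d k) y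
      = ((((1 : ℝ) / 2) * ∑ j ∈ Finset.univ.filter (fun j : Fin m => (j : ℕ) < k),
          (1 / d (σ j)) * ∑ i ∈ s (σ j), (y i) ^ 2 : ℝ) : EReal) :=
  gsk_conj_general k s hdisj hcover d hd y σ hσ
end
end

section
/- Let a ∈ ℝⁿ (with at least one nonzero coordinate) and k ≤ n. Then max over k-sparse vectors t ∈ ℝⁿ (i.e., ‖t‖₀ ≤ k) of { ⟨a,t⟩ − (1/2)‖t‖₂² } equals (1/2)·Σ_{i=1}^k a_{⟨i⟩}², where a_{⟨i⟩} is the i-th largest coordinate of a in absolute value. Moreover the maximum is attained by t equal to a restricted to the indices of the k largest absolute coordinates. -/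
/-!
On its support the objective splits into the terms `aᵢtᵢ - tᵢ²/2 ≤ aᵢ²/2`, with equality
at `tᵢ = aᵢ`, so a `k`-sparse `t` scores at most half the sum of `aᵢ²` over at most `k`
indices, and the `k` largest `aᵢ²` maximize such a sum. Keeping exactly those coordinates
of `a` attains the bound.
-/

open Finset

noncomputable section
open scoped Classical BigOperators

section TopSum

variable {ι M : Type*} [AddCommMonoid M] [LinearOrder M] [IsOrderedCancelAddMonoid M]

theorem Finset.sum_le_sum_of_card_le_of_forall_le {s t : Finset ι} {f : ι → M}
    (hcard : #s ≤ #t) (hle : ∀ i ∈ s, ∀ j ∈ t, f i ≤ f j)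
    (hnonneg : ∀ j ∈ t, 0 ≤ f j) :
    ∑ i ∈ s, f i ≤ ∑ j ∈ t, f j := by
  rcases t.eq_empty_or_nonempty with rfl | ht
  · simp_all
  calc ∑ i ∈ s, f i ≤ #s • t.inf' ht f :=
        sum_le_card_nsmul _ _ _ fun i hi => (le_inf'_iff ht f).2 (hle i hi)
    _ ≤ #t • t.inf' ht f := nsmul_le_nsmul_left ((le_inf'_iff ht f).2 hnonneg) hcard
    _ ≤ ∑ j ∈ t, f j := card_nsmul_le_sum _ _ _ fun j hj => inf'_le f hj

theorem Antitone.sum_le_sum_filter_val_lt {n k : ℕ} {f : Fin n → M} (hf : Antitone f)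
    (hf₀ : ∀ i, 0 ≤ f i) {U : Finset (Fin n)} (hU : #U ≤ k) :
    ∑ i ∈ U, f i ≤ ∑ i ∈ univ.filter (fun i : Fin n => (i : ℕ) < k), f i := by
  rw [← sum_sdiff_le_sum_sdiff]
  refine sum_le_sum_of_card_le_of_forall_le ?_ ?_ fun j _ => hf₀ j
  · rw [card_sdiff_le_card_sdiff_iff, Fin.card_filter_val_lt]
    exact le_min (card_le_univ U |>.trans_eq (Fintype.card_fin n)) hU
  · intro i hi j hj
    simp only [mem_sdiff, mem_filter, mem_univ, true_and, not_lt] at hi hj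
    exact hf (Fin.le_def.2 (by omega))

end TopSum

section Objective

variable {ι : Type*} [Fintype ι]

theorem sum_mul_sub_half_sum_sq_le (a t : ι → ℝ) :
    ∑ i, a i * t i - 1 / 2 * ∑ i, t i ^ 2
      ≤ 1 / 2 * ∑ i ∈ univ.filter (fun i => t i ≠ 0), a i ^ 2 := by
  calc ∑ i, a i * t i - 1 / 2 * ∑ i, t i ^ 2 = ∑ i, (a i * t i - 1 / 2 * t i ^ 2) := by
        rw [mul_sum, sum_sub_distrib]
    _ ≤ ∑ i, if t i ≠ 0 then 1 / 2 * a i ^ 2 else 0 := by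
        refine sum_le_sum fun i _ => ?_
        split_ifs with h
        · nlinarith [sq_nonneg (a i - t i)]
        · simp [not_not.1 h]
    _ = _ := by rw [← sum_filter, mul_sum]

theorem sum_mul_sub_half_sum_sq_ite (a : ι → ℝ) (p : ι → Prop) [DecidablePred p] :
    ∑ i, a i * (if p i then a i else 0) - 1 / 2 * ∑ i, (if p i then a i else 0) ^ 2
      = 1 / 2 * ∑ i ∈ univ.filter p, a i ^ 2 := by
  simp only [sum_filter, mul_ite, mul_zero, ite_pow, zero_pow two_ne_zero, ← sq]
  ring

theorem Equiv.Perm.filter_univ_symm (σ : Equiv.Perm ι) (p : ι → Prop) [DecidablePred p] :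
    univ.filter (fun i => p (σ.symm i)) = (univ.filter p).map σ.toEmbedding := by
  ext i
  simp

end Objective

theorem l0norm_ite_le {n : ℕ} (a : Fin n → ℝ) (p : Fin n → Prop) [DecidablePred p] :
    l0norm (fun i => if p i then a i else 0) ≤ #(univ.filter p) :=
  card_le_card fun i => by simp only [mem_filter, mem_univ, true_and]; grind

theorem max_over_sparse_general {n : ℕ} (k : ℕ)
    (a : Fin n → ℝ)
    (σ : Equiv.Perm (Fin n)) (hσ : Antitone fun i => |a (σ i)|) :
    IsGreatest
      {x : ℝ | ∃ t : Fin n → ℝ, l0norm t ≤ k ∧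
        x = (∑ i, a i * t i) - (1 / 2) * ∑ i, (t i) ^ 2}
      ((1 / 2) * ∑ i ∈ Finset.univ.filter (fun i : Fin n => (i : ℕ) < k), (a (σ i)) ^ 2)
    ∧ (l0norm (fun i => if ((σ.symm i : ℕ) < k) then a i else 0) ≤ k
      ∧ (∑ i, a i * (if ((σ.symm i : ℕ) < k) then a i else 0))
          - (1 / 2) * ∑ i, (if ((σ.symm i : ℕ) < k) then a i else 0) ^ 2
        = (1 / 2) * ∑ i ∈ Finset.univ.filter (fun i : Fin n => (i : ℕ) < k), (a (σ i)) ^ 2) := by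
  have htop := σ.filter_univ_symm fun j : Fin n => (j : ℕ) < k
  have hsparse : l0norm (fun i => if ((σ.symm i : ℕ) < k) then a i else 0) ≤ k := by
    refine (l0norm_ite_le a _).trans ?_
    rw [htop, card_map, Fin.card_filter_val_lt]
    exact min_le_right n k
  have hvalue := sum_mul_sub_half_sum_sq_ite a fun i => (σ.symm i : ℕ) < k
  rw [htop, sum_map] at hvalue
  refine ⟨⟨⟨_, hsparse, hvalue.symm⟩, ?_⟩, hsparse, hvalue⟩
  rintro _ ⟨t, ht, rfl⟩
  have hsq : Antitone fun i => a (σ i) ^ 2 := fun i j hij => sq_le_sq.2 (hσ hij)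
  set support := univ.filter fun i => t i ≠ 0
  calc _ ≤ 1 / 2 * ∑ i ∈ support, a i ^ 2 := sum_mul_sub_half_sum_sq_le a t
    _ = 1 / 2 * ∑ j ∈ support.map σ.symm.toEmbedding, a (σ j) ^ 2 := by simp [sum_map]
    _ ≤ _ := mul_le_mul_of_nonneg_left
        (hsq.sum_le_sum_filter_val_lt (fun _ => sq_nonneg _) (by rw [card_map]; exact ht))
        (by norm_num)

/-- for `a ≠ 0`, the maximum of `⟨a,t⟩ - ½‖t‖₂²` over `k`-sparse
vectors `t` equals half the sum of the `k` largest squared entries of `a` (in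
absolute value), attained at `a` restricted to the `k` largest-in-absolute-value
coordinates. -/
theorem max_over_sparse {n : ℕ} (k : ℕ) (hk : k ≤ n)
    (a : Fin n → ℝ) (ha : a ≠ 0)
    (σ : Equiv.Perm (Fin n)) (hσ : Antitone fun i => |a (σ i)|) :
    IsGreatest
      {x : ℝ | ∃ t : Fin n → ℝ, l0norm t ≤ k ∧
        x = (∑ i, a i * t i) - (1 / 2) * ∑ i, (t i) ^ 2}
      ((1 / 2) * ∑ i ∈ Finset.univ.filter (fun i : Fin n => (i : ℕ) < k), (a (σ i)) ^ 2)
    ∧ (l0norm (fun i => if ((σ.symm i : ℕ) < k) then a i else 0) ≤ k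
      ∧ (∑ i, a i * (if ((σ.symm i : ℕ) < k) then a i else 0))
          - (1 / 2) * ∑ i, (if ((σ.symm i : ℕ) < k) then a i else 0) ^ 2
        = (1 / 2) * ∑ i ∈ Finset.univ.filter (fun i : Fin n => (i : ℕ) < k), (a (σ i)) ^ 2) :=
  max_over_sparse_general k a σ hσ
end
end

section
/- The weighted group sparse envelope reduces to the scalar sparse envelope of the weighted group norms: GS_k(θ) = S_k((√d_1·‖θ_{s_1}‖₂, …, √d_m·‖θ_{s_m}‖₂)ᵀ), where S_k = s_k** is the biconjugate of s_k(x) = (1/2)‖x‖₂² + δ_{{x : ‖x‖₀ ≤ k}}(x) on ℝ^m. -/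
open Finset

noncomputable section
open scoped Classical BigOperators

/-!
The function `gs_k` is `s_k` evaluated at the weighted group norms `√d_j ‖θ_{s_j}‖`, and
`s_k` as well as its conjugate are monotone in the absolute value of each coordinate. For such
an `f`, Cauchy–Schwarz inside each group, with equality attained by rescaling each group of the
argument, shows that the conjugate of `θ ↦ f (c_j ‖θ_{s_j}‖)_j` is `y ↦ f* (‖y_{s_j}‖ / c_j)_j`.
Applying this with `c = √d` and then with `c = 1/√d` gives the formula.
-/

def groupNorm {n m : ℕ} (s : Fin m → Finset (Fin n)) (θ : Fin n → ℝ) (j : Fin m) : ℝ :=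
  √(∑ i ∈ s j, θ i ^ 2)

def AbsMonotone {m : ℕ} (f : (Fin m → ℝ) → EReal) : Prop :=
  ∀ ⦃v w : Fin m → ℝ⦄, (∀ j, |v j| ≤ |w j|) → f v ≤ f w

section Groups

variable {n m : ℕ} {s : Fin m → Finset (Fin n)}

lemma groupNorm_nonneg (θ : Fin n → ℝ) (j : Fin m) : 0 ≤ groupNorm s θ j :=
  Real.sqrt_nonneg _

lemma groupNorm_sq (θ : Fin n → ℝ) (j : Fin m) :
    groupNorm s θ j ^ 2 = ∑ i ∈ s j, θ i ^ 2 :=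
  Real.sq_sqrt (sum_nonneg fun _ _ => sq_nonneg _)

lemma groupNorm_eq_zero_iff (θ : Fin n → ℝ) (j : Fin m) :
    groupNorm s θ j = 0 ↔ groupProj (s j) θ = 0 := by
  rw [groupNorm, Real.sqrt_eq_zero (sum_nonneg fun _ _ => sq_nonneg _),
    sum_eq_zero_iff_of_nonneg fun _ _ => sq_nonneg _, funext_iff]
  simp [groupProj]

lemma exists_index_of_partition (hdisj : ∀ j j', j ≠ j' → Disjoint (s j) (s j'))
    (hcover : ∀ i, ∃ j, i ∈ s j) :
    ∃ g : Fin n → Fin m, ∀ i j, i ∈ s j ↔ g i = j := by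
  choose g hg using hcover
  refine ⟨g, fun i j => ⟨fun hi => ?_, fun h => h ▸ hg i⟩⟩
  by_contra hne
  exact disjoint_left.mp (hdisj _ _ hne) (hg i) hi

variable {g : Fin n → Fin m}

lemma sum_eq_sum_groups (hg : ∀ i j, i ∈ s j ↔ g i = j) (f : Fin n → ℝ) :
    ∑ i, f i = ∑ j, ∑ i ∈ s j, f i := by
  rw [← sum_fiberwise univ g f]
  congr! with j
  ext i
  simp [hg]

lemma sum_mul_le_sum_groupNorm_mul (hg : ∀ i j, i ∈ s j ↔ g i = j) (y θ : Fin n → ℝ) :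
    ∑ i, y i * θ i ≤ ∑ j, groupNorm s y j * groupNorm s θ j := by
  rw [sum_eq_sum_groups hg]
  exact sum_le_sum fun j _ => Real.sum_mul_le_sqrt_mul_sqrt _ _ _

/-- Rescaling each group of `v` to the norm `a j` attains equality in
`sum_mul_le_sum_groupNorm_mul` (groups where `v` vanishes stay zero). -/
lemma exists_groupNorm_le_and_sum_mul_eq (hg : ∀ i j, i ∈ s j ↔ g i = j) (v : Fin n → ℝ)
    {a : Fin m → ℝ} (ha : ∀ j, 0 ≤ a j) :
    ∃ u : Fin n → ℝ, (∀ j, groupNorm s u j ≤ a j) ∧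
      ∀ j, ∑ i ∈ s j, v i * u i = a j * groupNorm s v j := by
  set r : Fin m → ℝ := fun j => a j / groupNorm s v j
  have hr : ∀ j, 0 ≤ r j := fun j => div_nonneg (ha j) (groupNorm_nonneg v j)
  have hr_mul : ∀ j, r j * groupNorm s v j ≤ a j := fun j => by
    rcases (groupNorm_nonneg (s := s) v j).eq_or_lt with h | h
    · simp [← h, ha j]
    · exact (div_mul_cancel₀ _ h.ne').le
  have hr_mul_sq : ∀ j, r j * groupNorm s v j ^ 2 = a j * groupNorm s v j := fun j => by
    rcases (groupNorm_nonneg (s := s) v j).eq_or_lt with h | h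
    · simp [← h]
    · simp only [r]
      field_simp
  refine ⟨fun i => r (g i) * v i, fun j => ?_, fun j => ?_⟩
  · have hsum : ∑ i ∈ s j, (r (g i) * v i) ^ 2 = (r j * groupNorm s v j) ^ 2 := by
      rw [mul_pow, groupNorm_sq, mul_sum]
      exact sum_congr rfl fun i hi => by rw [(hg i j).mp hi, mul_pow]
    rw [groupNorm, hsum, Real.sqrt_sq (mul_nonneg (hr j) (groupNorm_nonneg v j))]
    exact hr_mul j
  · rw [← hr_mul_sq, groupNorm_sq, mul_sum]
    exact sum_congr rfl fun i hi => by
      show v i * (r (g i) * v i) = _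
      rw [(hg i j).mp hi]; ring

theorem fconj_comp_groupNorm {f : (Fin m → ℝ) → EReal} (hf : AbsMonotone f)
    (hg : ∀ i j, i ∈ s j ↔ g i = j) {c : Fin m → ℝ} (hc : ∀ j, 0 < c j)
    (y : Fin n → ℝ) :
    fconj (fun θ => f fun j => c j * groupNorm s θ j) y
      = fconj f fun j => (c j)⁻¹ * groupNorm s y j := by
  apply le_antisymm
  · refine iSup_le fun θ => le_iSup_of_le (fun j => c j * groupNorm s θ j) ?_
    refine EReal.sub_le_sub (EReal.coe_le_coe_iff.mpr ?_) le_rfl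
    calc ∑ i, y i * θ i ≤ ∑ j, groupNorm s y j * groupNorm s θ j :=
          sum_mul_le_sum_groupNorm_mul hg y θ
      _ = ∑ j, (c j)⁻¹ * groupNorm s y j * (c j * groupNorm s θ j) :=
          sum_congr rfl fun j _ => by field_simp [(hc j).ne']
  · refine iSup_le fun w => ?_
    obtain ⟨u, hu_norm, hu_sum⟩ := exists_groupNorm_le_and_sum_mul_eq hg y
      (a := fun j => (c j)⁻¹ * |w j|) fun j => by have := hc j; positivity
    refine le_iSup_of_le u (EReal.sub_le_sub (EReal.coe_le_coe_iff.mpr ?_) (hf fun j => ?_))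
    · calc ∑ j, (c j)⁻¹ * groupNorm s y j * w j
            ≤ ∑ j, (c j)⁻¹ * |w j| * groupNorm s y j := sum_le_sum fun j _ => by
              rw [mul_right_comm]
              exact mul_le_mul_of_nonneg_right
                (mul_le_mul_of_nonneg_left (le_abs_self _) (inv_nonneg.mpr (hc j).le))
                (groupNorm_nonneg y j)
        _ = ∑ i, y i * u i := by
              rw [sum_eq_sum_groups hg]
              exact sum_congr rfl fun j _ => (hu_sum j).symm
    · rw [abs_of_nonneg (mul_nonneg (hc j).le (groupNorm_nonneg u j))]
      calc c j * groupNorm s u j ≤ c j * ((c j)⁻¹ * |w j|) :=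
            mul_le_mul_of_nonneg_left (hu_norm j) (hc j).le
        _ = |w j| := by field_simp [(hc j).ne']

lemma gsk_eq_sparseFun_comp (d : Fin m → ℝ) (hd : ∀ j, 0 < d j) (k : ℕ) :
    gsk s d k = fun θ => sparseFun k fun j => √(d j) * groupNorm s θ j := by
  funext θ
  have hcard : nnzGroups s θ = l0norm fun j => √(d j) * groupNorm s θ j := by
    unfold nnzGroups l0norm
    congr! 2 with j
    rw [ne_eq, ne_eq, mul_eq_zero, groupNorm_eq_zero_iff, Real.sqrt_eq_zero (hd j).le,
      or_iff_right (hd j).ne']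
  have hsq : ∀ j, d j * ∑ i ∈ s j, θ i ^ 2 = (√(d j) * groupNorm s θ j) ^ 2 := fun j => by
    rw [mul_pow, Real.sq_sqrt (hd j).le, groupNorm_sq]
  simp only [gsk, sparseFun, hcard, hsq]

end Groups

section AbsMonotone

variable {m : ℕ}

lemma absMonotone_sparseFun (k : ℕ) : AbsMonotone (sparseFun (m := m) k) := by
  intro v w h
  have hl0 : l0norm v ≤ l0norm w := card_le_card fun j => by
    simp only [mem_filter, mem_univ, true_and, ← abs_pos]
    exact fun hv => hv.trans_le (h j)
  unfold sparseFun
  split_ifs with hv hw hw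
  · have hsq : ∑ j, v j ^ 2 ≤ ∑ j, w j ^ 2 := sum_le_sum fun j _ => by
      simpa only [sq_abs] using pow_le_pow_left₀ (abs_nonneg _) (h j) 2
    exact EReal.coe_le_coe_iff.mpr (by linarith)
  · exact le_top
  · exact absurd (hl0.trans hw) hv
  · exact le_rfl

lemma AbsMonotone.fconj {f : (Fin m → ℝ) → EReal} (hf : AbsMonotone f) :
    AbsMonotone (fconj f) := by
  intro v w h
  refine iSup_le fun x => ?_
  -- align the signs of `x` with those of `w`
  let x' : Fin m → ℝ := fun j => if 0 ≤ w j then |x j| else -|x j|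
  have habs : ∀ j, |x' j| = |x j| := fun j => by
    by_cases hj : 0 ≤ w j <;> simp [x', hj]
  have hwx' : ∀ j, w j * x' j = |w j| * |x j| := fun j => by
    by_cases hj : 0 ≤ w j
    · simp [x', hj, abs_of_nonneg hj]
    · simp [x', hj, abs_of_neg (not_le.mp hj)]
  refine le_iSup_of_le x' (EReal.sub_le_sub (EReal.coe_le_coe_iff.mpr ?_)
    (hf fun j => (habs j).le))
  refine sum_le_sum fun j _ => ?_
  calc v j * x j ≤ |v j| * |x j| := (le_abs_self _).trans (abs_mul _ _).le
    _ ≤ |w j| * |x j| := mul_le_mul_of_nonneg_right (h j) (abs_nonneg _)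
    _ = w j * x' j := (hwx' j).symm

end AbsMonotone

theorem gsk_biconj_eq_sef_general {n m : ℕ} (k : ℕ)
    (s : Fin m → Finset (Fin n))
    (hdisj : ∀ j j', j ≠ j' → Disjoint (s j) (s j'))
    (hcover : ∀ i, ∃ j, i ∈ s j)
    (d : Fin m → ℝ) (hd : ∀ j, 0 < d j)
    (θ : Fin n → ℝ) :
    fconj (fconj (gsk s d k)) θ
      = fconj (fconj (sparseFun k))
          (fun j => Real.sqrt (d j) * Real.sqrt (∑ i ∈ s j, (θ i) ^ 2)) := by
  obtain ⟨g, hg⟩ := exists_index_of_partition hdisj hcover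
  have hsd : ∀ j, 0 < √(d j) := fun j => Real.sqrt_pos.mpr (hd j)
  have hconj : fconj (gsk s d k)
      = fun y => fconj (sparseFun k) fun j => (√(d j))⁻¹ * groupNorm s y j := by
    rw [gsk_eq_sparseFun_comp d hd k]
    exact funext (fconj_comp_groupNorm (absMonotone_sparseFun k) hg hsd)
  rw [hconj, fconj_comp_groupNorm (absMonotone_sparseFun k).fconj hg
    (fun j => inv_pos.mpr (hsd j)) θ]
  simp only [inv_inv, groupNorm]

/-- the weighted group sparse envelope reduces to the scalar
sparse envelope applied to the vector of weighted group norms. -/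
theorem gsk_biconj_eq_sef {n m : ℕ} (k : ℕ) (hk1 : 1 ≤ k) (hkm : k ≤ m)
    (s : Fin m → Finset (Fin n))
    (hdisj : ∀ j j', j ≠ j' → Disjoint (s j) (s j'))
    (hcover : ∀ i, ∃ j, i ∈ s j)
    (d : Fin m → ℝ) (hd : ∀ j, 0 < d j)
    (θ : Fin n → ℝ) :
    fconj (fconj (gsk s d k)) θ
      = fconj (fconj (sparseFun k))
          (fun j => Real.sqrt (d j) * Real.sqrt (∑ i ∈ s j, (θ i) ^ 2)) :=
  gsk_biconj_eq_sef_general k s hdisj hcover d hd θ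
end
end

section
/- GS_k is a convex, nonnegative, lower semicontinuous function on ℝⁿ satisfying GS_k(θ) ≤ gs_k(θ) for all θ, and GS_k(θ) = gs_k(θ) = (1/2)Σ_j d_j‖θ_{s_j}‖₂² whenever θ has at most k nonzero groups... in particular GS_k(0) = 0. -/
/-!
`GS_k` is a Fenchel conjugate, so it is convex and lower semicontinuous, and `GS_k ≤ gs_k` by the
Fenchel–Young inequality. Conversely `GS_k` dominates every affine minorant of `gs_k`. Since
`gs_k ≥ q` for the convex quadratic `q(θ) = ½ Σⱼ dⱼ ‖θ_{sⱼ}‖²`, both `0` and every tangent plane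
of `q` are such minorants: the first gives `GS_k ≥ 0`, and the tangent plane at a point of `C_k`,
where `gs_k = q`, gives `GS_k = q` there.
-/

open Finset

noncomputable section
open scoped Classical BigOperators

lemma EReal.coe_sub_le_comm {a : ℝ} {x y : EReal} (h : (a : EReal) - x ≤ y) :
    (a : EReal) - y ≤ x := by
  induction x with
  | bot =>
    rw [EReal.coe_sub_bot, top_le_iff] at h
    simp [h, EReal.sub_top]
  | coe x =>
    exact EReal.sub_le_of_le_add'
      ((EReal.sub_le_iff_le_add (.inl (EReal.coe_ne_bot x)) (.inl (EReal.coe_ne_top x))).1 h)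
  | top => exact le_top

lemma EReal.continuous_coe_sub_const (c : EReal) : Continuous fun x : ℝ => (x : EReal) - c := by
  induction c with
  | bot => simpa only [EReal.coe_sub_bot] using continuous_const
  | coe c =>
    simp only [← EReal.coe_sub]
    exact continuous_coe_real_ereal.comp (continuous_sub_right c)
  | top => simpa only [EReal.sub_top] using continuous_const

section FenchelConjugate

variable {n : ℕ} (f : (Fin n → ℝ) → EReal)

lemma le_fconj (y θ : Fin n → ℝ) : ((y ⬝ᵥ θ : ℝ) : EReal) - f θ ≤ fconj f y :=
  le_iSup (fun θ => ((y ⬝ᵥ θ : ℝ) : EReal) - f θ) θ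

lemma fconj_ne_bot {θ₀ : Fin n → ℝ} (h : f θ₀ ≠ ⊤) (y : Fin n → ℝ) : fconj f y ≠ ⊥ := by
  refine ne_bot_of_le_ne_bot ?_ (le_fconj f y θ₀)
  induction hθ₀ : f θ₀ with
  | bot => simp
  | coe c => exact EReal.coe_sub _ c ▸ EReal.coe_ne_bot _
  | top => exact absurd hθ₀ h

lemma fconj_fconj_le (θ : Fin n → ℝ) : fconj (fconj f) θ ≤ f θ :=
  iSup_le fun y => EReal.coe_sub_le_comm (a := θ ⬝ᵥ y) (dotProduct_comm θ y ▸ le_fconj f y θ)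

lemma le_fconj_fconj_of_affine_le {y : Fin n → ℝ} {c : ℝ}
    (h : ∀ x, ((y ⬝ᵥ x - c : ℝ) : EReal) ≤ f x) (θ : Fin n → ℝ) :
    ((y ⬝ᵥ θ - c : ℝ) : EReal) ≤ fconj (fconj f) θ := by
  have hconj : fconj f y ≤ c :=
    iSup_le fun x => EReal.coe_sub_le_comm (EReal.coe_sub _ _ ▸ h x)
  calc ((y ⬝ᵥ θ - c : ℝ) : EReal) = ((θ ⬝ᵥ y : ℝ) : EReal) - c := by
        rw [dotProduct_comm, EReal.coe_sub]
    _ ≤ ((θ ⬝ᵥ y : ℝ) : EReal) - fconj f y := EReal.sub_le_sub le_rfl hconj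
    _ ≤ fconj (fconj f) θ := le_fconj _ θ y

lemma lowerSemicontinuous_fconj : LowerSemicontinuous (fconj f) :=
  lowerSemicontinuous_iSup fun θ =>
    ((EReal.continuous_coe_sub_const (f θ)).comp
      (continuous_id.dotProduct continuous_const)).lowerSemicontinuous

lemma fconj_smul_add_smul_le (hf : ∀ θ, f θ ≠ ⊥) (y y' : Fin n → ℝ) {a b : ℝ}
    (ha : 0 ≤ a) (hb : 0 ≤ b) (hab : a + b = 1) :
    fconj f (a • y + b • y') ≤ (a : EReal) * fconj f y + (b : EReal) * fconj f y' := by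
  refine iSup_le fun θ => ?_
  induction hfθ : f θ with
  | bot => exact absurd hfθ (hf θ)
  | top => exact EReal.sub_top _ ▸ bot_le
  | coe c =>
    have hy := hfθ ▸ le_fconj f y θ
    have hy' := hfθ ▸ le_fconj f y' θ
    calc (((a • y + b • y') ⬝ᵥ θ : ℝ) : EReal) - c
        = (a : EReal) * ((y ⬝ᵥ θ - c : ℝ) : EReal)
            + (b : EReal) * ((y' ⬝ᵥ θ - c : ℝ) : EReal) := by
          rw [← EReal.coe_sub, ← EReal.coe_mul, ← EReal.coe_mul, ← EReal.coe_add,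
            add_dotProduct, smul_dotProduct, smul_dotProduct, smul_eq_mul, smul_eq_mul]
          norm_cast
          linear_combination c * hab
      _ ≤ (a : EReal) * fconj f y + (b : EReal) * fconj f y' := by
          gcongr
          · exact EReal.coe_sub _ _ ▸ hy
          · exact EReal.coe_sub _ _ ▸ hy'

end FenchelConjugate

section GroupSparse

variable {n m : ℕ} (s : Fin m → Finset (Fin n)) (d : Fin m → ℝ)

def groupQuadratic (θ : Fin n → ℝ) : ℝ :=
  (1 / 2) * ∑ j, d j * ∑ i ∈ s j, θ i ^ 2

def groupGradient (θ : Fin n → ℝ) : Fin n → ℝ :=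
  ∑ j, d j • groupProj (s j) θ

lemma groupProj_dotProduct (t : Finset (Fin n)) (θ v : Fin n → ℝ) :
    groupProj t θ ⬝ᵥ v = ∑ i ∈ t, θ i * v i := by
  simp only [dotProduct, groupProj, ite_mul, zero_mul, sum_ite_mem, univ_inter]

lemma groupGradient_dotProduct (θ v : Fin n → ℝ) :
    groupGradient s d θ ⬝ᵥ v = ∑ j, d j * ∑ i ∈ s j, θ i * v i := by
  simp only [groupGradient, sum_dotProduct, smul_dotProduct, groupProj_dotProduct, smul_eq_mul]

lemma two_mul_sum_mul_sub_sum_sq_le (t : Finset (Fin n)) (θ x : Fin n → ℝ) :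
    2 * ∑ i ∈ t, θ i * x i - ∑ i ∈ t, θ i ^ 2 ≤ ∑ i ∈ t, x i ^ 2 := by
  rw [mul_sum, ← sum_sub_distrib]
  exact sum_le_sum fun i _ => by nlinarith [sq_nonneg (x i - θ i)]

lemma groupGradient_tangent_le (hd : ∀ j, 0 ≤ d j) (θ x : Fin n → ℝ) :
    groupGradient s d θ ⬝ᵥ x - (groupGradient s d θ ⬝ᵥ θ - groupQuadratic s d θ)
      ≤ groupQuadratic s d x := by
  have hgroups : ∑ j, d j * (2 * ∑ i ∈ s j, θ i * x i - ∑ i ∈ s j, θ i ^ 2)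
      ≤ ∑ j, d j * ∑ i ∈ s j, x i ^ 2 :=
    sum_le_sum fun j _ =>
      mul_le_mul_of_nonneg_left (two_mul_sum_mul_sub_sum_sq_le (s j) θ x) (hd j)
  simp only [mul_sub, sum_sub_distrib, mul_left_comm _ (2 : ℝ), ← mul_sum] at hgroups
  simp only [groupGradient_dotProduct, groupQuadratic, ← sq]
  linarith

lemma groupQuadratic_nonneg (hd : ∀ j, 0 ≤ d j) (θ : Fin n → ℝ) : 0 ≤ groupQuadratic s d θ := by
  unfold groupQuadratic
  exact mul_nonneg (by norm_num) (sum_nonneg fun j _ =>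
    mul_nonneg (hd j) (sum_nonneg fun i _ => sq_nonneg _))

variable (k : ℕ)

lemma gsk_of_nnzGroups_le {θ : Fin n → ℝ} (hθ : nnzGroups s θ ≤ k) :
    gsk s d k θ = groupQuadratic s d θ :=
  if_pos hθ

lemma groupQuadratic_le_gsk (θ : Fin n → ℝ) : (groupQuadratic s d θ : EReal) ≤ gsk s d k θ := by
  unfold gsk
  split_ifs
  exacts [le_rfl, le_top]

lemma groupProj_zero (t : Finset (Fin n)) : groupProj t 0 = 0 := by
  ext i
  simp [groupProj]

lemma nnzGroups_zero : nnzGroups s 0 = 0 := by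
  simp [nnzGroups, groupProj_zero]

lemma gsk_nonneg (hd : ∀ j, 0 ≤ d j) (θ : Fin n → ℝ) : 0 ≤ gsk s d k θ :=
  (EReal.coe_nonneg.2 (groupQuadratic_nonneg s d hd θ)).trans (groupQuadratic_le_gsk s d k θ)

lemma fconj_fconj_gsk_nonneg (hd : ∀ j, 0 ≤ d j) (θ : Fin n → ℝ) :
    0 ≤ fconj (fconj (gsk s d k)) θ := by
  simpa using le_fconj_fconj_of_affine_le (gsk s d k) (y := 0) (c := 0)
    (fun x => by simpa using gsk_nonneg s d k hd x) θ

lemma fconj_fconj_gsk_of_nnzGroups_le (hd : ∀ j, 0 ≤ d j) {θ : Fin n → ℝ}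
    (hθ : nnzGroups s θ ≤ k) :
    fconj (fconj (gsk s d k)) θ = groupQuadratic s d θ := by
  refine le_antisymm (gsk_of_nnzGroups_le s d k hθ ▸ fconj_fconj_le _ θ) ?_
  have := le_fconj_fconj_of_affine_le (gsk s d k)
    (fun x => (EReal.coe_le_coe_iff.2 (groupGradient_tangent_le s d hd θ x)).trans
      (groupQuadratic_le_gsk s d k x)) θ
  rwa [sub_sub_cancel] at this

end GroupSparse

theorem gsk_biconj_properties_general {n m : ℕ} (k : ℕ)
    (s : Fin m → Finset (Fin n))
    (d : Fin m → ℝ) (hd : ∀ j, 0 < d j) :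
    (∀ (θ θ' : Fin n → ℝ) (a b : ℝ), 0 ≤ a → 0 ≤ b → a + b = 1 →
        fconj (fconj (gsk s d k)) (a • θ + b • θ')
          ≤ ((a : ℝ) : EReal) * fconj (fconj (gsk s d k)) θ
            + ((b : ℝ) : EReal) * fconj (fconj (gsk s d k)) θ')
    ∧ (∀ θ, (0 : EReal) ≤ fconj (fconj (gsk s d k)) θ)
    ∧ LowerSemicontinuous (fconj (fconj (gsk s d k)))
    ∧ (∀ θ, fconj (fconj (gsk s d k)) θ ≤ gsk s d k θ)
    ∧ (∀ θ, nnzGroups s θ ≤ k →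
        fconj (fconj (gsk s d k)) θ
          = ((((1 : ℝ) / 2) * ∑ j, d j * ∑ i ∈ s j, (θ i) ^ 2 : ℝ) : EReal))
    ∧ fconj (fconj (gsk s d k)) 0 = 0 := by
  have hd₀ : ∀ j, 0 ≤ d j := fun j => (hd j).le
  have hzero : nnzGroups s 0 ≤ k := (nnzGroups_zero s).trans_le k.zero_le
  have hconj_ne_bot : ∀ y, fconj (gsk s d k) y ≠ ⊥ :=
    fconj_ne_bot _ (gsk_of_nnzGroups_le s d k hzero ▸ EReal.coe_ne_top _)
  refine ⟨fun θ θ' a b ha hb hab => fconj_smul_add_smul_le _ hconj_ne_bot θ θ' ha hb hab,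
    fconj_fconj_gsk_nonneg s d k hd₀, lowerSemicontinuous_fconj _, fconj_fconj_le _,
    fun θ hθ => fconj_fconj_gsk_of_nnzGroups_le s d k hd₀ hθ, ?_⟩
  rw [fconj_fconj_gsk_of_nnzGroups_le s d k hd₀ hzero]
  simp [groupQuadratic]

/-- `GS_k = gs_k**` is convex, nonnegative, lower semicontinuous,
minorizes `gs_k`, agrees with `gs_k` on vectors with at most `k` nonzero
groups, and vanishes at the origin. -/
theorem gsk_biconj_properties {n m : ℕ} (k : ℕ) (hk1 : 1 ≤ k) (hkm : k ≤ m)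
    (s : Fin m → Finset (Fin n))
    (hdisj : ∀ j j', j ≠ j' → Disjoint (s j) (s j'))
    (hcover : ∀ i, ∃ j, i ∈ s j)
    (d : Fin m → ℝ) (hd : ∀ j, 0 < d j) :
    (∀ (θ θ' : Fin n → ℝ) (a b : ℝ), 0 ≤ a → 0 ≤ b → a + b = 1 →
        fconj (fconj (gsk s d k)) (a • θ + b • θ')
          ≤ ((a : ℝ) : EReal) * fconj (fconj (gsk s d k)) θ
            + ((b : ℝ) : EReal) * fconj (fconj (gsk s d k)) θ')
    ∧ (∀ θ, (0 : EReal) ≤ fconj (fconj (gsk s d k)) θ)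
    ∧ LowerSemicontinuous (fconj (fconj (gsk s d k)))
    ∧ (∀ θ, fconj (fconj (gsk s d k)) θ ≤ gsk s d k θ)
    ∧ (∀ θ, nnzGroups s θ ≤ k →
        fconj (fconj (gsk s d k)) θ
          = ((((1 : ℝ) / 2) * ∑ j, d j * ∑ i ∈ s j, (θ i) ^ 2 : ℝ) : EReal))
    ∧ fconj (fconj (gsk s d k)) 0 = 0 :=
  gsk_biconj_properties_general k s d hd
end
end
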